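/- Let G be a (d+1)-lateration graph on n vertices with lateration ordering 1, ..., n, and let (G,P) be a framework in general position in R^d with d ≤ n-1. Then there exists a symmetric positive semidefinite n × n matrix S of rank n - d - 1 such that A S = 0 (where A = [P; e^T]) and S_{ij} = 0 for every pair i ≠ j with (i,j) not an edge of G. -/

import Mathlib

/-!
Write `A = [P; eᵀ]`, so that `ker A` is the space of affine dependencies of the points. A vertex
`v ≥ d + 1` and its `d + 1` earlier neighbours, which are affinely independent and hence affinely
span `ℝ^d`, carry an affine dependency `ω_v` with `ω_v v = 1` and `ω_v i = 0` for `i > v`. These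
form a Gale matrix `W`: it is unitriangular on the rows `v ≥ d + 1`, and its columns span `ker A`
because a dependency vanishing on those rows lives on the affinely independent first `d + 1`
points. Every `S = W Λ Wᵀ` with `Λ` positive definite is then PSD of rank `n - d - 1` with
`A S = 0`, and it remains to choose `Λ` so that `S` vanishes on the non-edges.

By Hahn–Banach such a `Λ` exists unless some nonzero symmetric `C` supported on the non-edges
has `zᵀ C z ≥ 0` for all affine dependencies `z`. No such `C` exists, by induction along the
lateration order: deleting the row and column of the last vertex `v` involved leaves a `C` of the
same kind, hence zero, so `zᵀ C z = 2 z_v ⟨c, z⟩` for the column `c` of `v`, which vanishes on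
the neighbours of `v`. Adding multiples of `ω_v` to `z` changes the sign of `z_v` but not
`⟨c, z⟩`, so `⟨c, z⟩ = 0` whenever `z_v = 0`; testing against the dependency of
`N(v) ∪ {i}` gives `c i = 0`.
-/

open Matrix Finset

section AugmentedConfig

variable {ι : Type*} [Fintype ι] {d : ℕ}

/-- The matrix `A = [P; eᵀ]` of the statement. -/
def augmentedConfig (p : ι → Fin d → ℝ) : Matrix (Fin (d + 1)) ι ℝ :=
  Matrix.of fun i j => if h : (i : ℕ) < d then p j ⟨i, h⟩ else 1

theorem augmentedConfig_mulVec_eq_zero_iff (p : ι → Fin d → ℝ) (z : ι → ℝ) :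
    augmentedConfig p *ᵥ z = 0 ↔ ∑ i, z i = 0 ∧ ∑ i, z i • p i = 0 := by
  rw [funext_iff, Fin.forall_fin_succ', funext_iff (g := (0 : Fin d → ℝ)), and_comm]
  simp [augmentedConfig, mulVec, dotProduct, Finset.sum_apply, mul_comm]

theorem exists_augmentedConfig_mulVec_eq_zero (p : ι → Fin d → ℝ) {s : Finset ι}
    (hs : AffineIndependent ℝ (fun i : s => p i)) (hcard : s.card = d + 1) {w : ι}
    (hw : w ∉ s) :
    ∃ ζ : ι → ℝ, augmentedConfig p *ᵥ ζ = 0 ∧ ζ w = 1 ∧ ∀ i, i ≠ w → i ∉ s → ζ i = 0 := by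
  classical
  have hspan : affineSpan ℝ (p '' s) = ⊤ := by
    rw [Set.image_eq_range]
    exact hs.affineSpan_eq_top_iff_card_eq_finrank_add_one.mpr (by simp [hcard])
  obtain ⟨t, g, hts, hg, hpw⟩ :=
    eq_affineCombination_of_mem_affineSpan_image (hspan ▸ AffineSubspace.mem_top ℝ _ (p w))
  rw [affineCombination_eq_linear_combination _ _ _ hg] at hpw
  have hwt : w ∉ t := fun h => hw (hts h)
  refine ⟨fun i => (if i = w then 1 else 0) - if i ∈ t then g i else 0, ?_, by simp [hwt], ?_⟩
  · rw [augmentedConfig_mulVec_eq_zero_iff]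
    simp [Finset.sum_sub_distrib, sub_smul, ite_smul, Finset.sum_ite_mem, hg, ← hpw]
  · intro i hiw his
    have hit : i ∉ t := fun h => his (hts h)
    simp [hiw, hit]

theorem eq_zero_of_augmentedConfig_mulVec_eq_zero {p : ι → Fin d → ℝ} {s : Finset ι}
    (hs : AffineIndependent ℝ (fun i : s => p i)) {z : ι → ℝ}
    (hz : augmentedConfig p *ᵥ z = 0) (hzs : ∀ i ∉ s, z i = 0) : z = 0 := by
  rw [augmentedConfig_mulVec_eq_zero_iff] at hz
  have hsum {M : Type} [AddCommMonoid M] (f : ι → M) (hf : ∀ i ∉ s, f i = 0) :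
      ∑ i : s, f i = ∑ i, f i := by
    rw [Finset.sum_coe_sort]
    exact Finset.sum_subset (Finset.subset_univ s) fun i _ hi => hf i hi
  have hzero := hs.eq_zero_of_sum_eq_zero (s := univ) (w := fun i : s => z i)
    ((hsum z hzs).trans hz.1)
    ((hsum (fun i => z i • p i) fun i hi => by simp [hzs i hi]).trans hz.2)
  funext i
  by_cases hi : i ∈ s
  · exact hzero ⟨i, hi⟩ (mem_univ _)
  · exact hzs i hi

theorem eq_zero_of_forall_nonneg_mul_dotProduct (p : ι → Fin d → ℝ) {N : Finset ι}
    (hN : AffineIndependent ℝ (fun i : N => p i)) (hNcard : N.card = d + 1) {R : Set ι}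
    (hNR : ∀ i ∈ N, i ∈ R) {v : ι} (hv : v ∉ R) {c : ι → ℝ} (hcR : ∀ i ∉ R, c i = 0)
    (hcN : ∀ i ∈ N, c i = 0)
    (h : ∀ z, augmentedConfig p *ᵥ z = 0 → (∀ i, i ≠ v → i ∉ R → z i = 0) →
      0 ≤ z v * (c ⬝ᵥ z)) :
    c = 0 := by
  have hdot (ζ : ι → ℝ) (w : ι) (hζw : ζ w = 1) (hζ : ∀ i, i ≠ w → i ∉ N → ζ i = 0) :
      c ⬝ᵥ ζ = c w := by
    rw [dotProduct, Finset.sum_eq_single w (fun i _ hiw => ?_) (by simp), hζw, mul_one]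
    by_cases hi : i ∈ N
    · rw [hcN i hi, zero_mul]
    · rw [hζ i hiw hi, mul_zero]
  obtain ⟨ω, hAω, hωv, hω⟩ :=
    exists_augmentedConfig_mulVec_eq_zero p hN hNcard fun h => hv (hNR v h)
  have hcω : c ⬝ᵥ ω = 0 := (hdot ω v hωv hω).trans (hcR v hv)
  -- Perturbing `z` along `ω` makes `z v` take either sign without changing `c ⬝ᵥ z`.
  have horth (z : ι → ℝ) (hz : augmentedConfig p *ᵥ z = 0) (hzR : ∀ i ∉ R, z i = 0) :
      c ⬝ᵥ z = 0 := by
    have hpert (t : ℝ) : 0 ≤ t * (c ⬝ᵥ z) := by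
      have hsupp : ∀ i, i ≠ v → i ∉ R → (z + t • ω) i = 0 := fun i hiv hiR => by
        simp [hzR i hiR, hω i hiv fun hi => hiR (hNR i hi)]
      simpa [hzR v hv, hωv, dotProduct_add, hcω] using
        h (z + t • ω) (by rw [mulVec_add, mulVec_smul, hz, hAω, smul_zero, add_zero]) hsupp
    linarith [hpert 1, hpert (-1)]
  funext i
  by_cases hiR : i ∈ R
  · by_cases hiN : i ∈ N
    · exact hcN i hiN
    · obtain ⟨ζ, hAζ, hζi, hζ⟩ := exists_augmentedConfig_mulVec_eq_zero p hN hNcard hiN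
      rw [← hdot ζ i hζi hζ]
      exact horth ζ hAζ fun j hjR => hζ j (by rintro rfl; exact hjR hiR) fun hj => hjR (hNR j hj)
  · exact hcR i hiR

end AugmentedConfig

section GaleMatrix

variable {ρ ι κ : Type*} [Fintype ι] [Fintype κ] [DecidableEq κ]

theorem exists_mulVec_eq_of_mulVec_eq_zero {K : Type*} [Field K] {A : Matrix ρ ι K}
    {W : Matrix ι κ K} {v : κ → ι} (hAW : A * W = 0) (hT : (W.submatrix v id).det ≠ 0)
    (hA : ∀ z, A *ᵥ z = 0 → (∀ a, z (v a) = 0) → z = 0) {z : ι → K} (hz : A *ᵥ z = 0) :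
    ∃ x, W *ᵥ x = z := by
  set T := W.submatrix v id
  refine ⟨T⁻¹ *ᵥ (z ∘ v), (sub_eq_zero.mp (hA _ ?_ fun a => ?_)).symm⟩
  · rw [mulVec_sub, mulVec_mulVec, hAW, zero_mulVec, hz, sub_zero]
  · have hrow : (W *ᵥ (T⁻¹ *ᵥ (z ∘ v))) (v a) = (T *ᵥ (T⁻¹ *ᵥ (z ∘ v))) a := rfl
    rw [Pi.sub_apply, hrow, mulVec_mulVec, mul_nonsing_inv _ (isUnit_iff_ne_zero.mpr hT),
      one_mulVec, Function.comp_apply, sub_self]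

theorem rank_mul_mul_transpose_of_posDef {W : Matrix ι κ ℝ} {v : κ → ι}
    (hT : (W.submatrix v id).det ≠ 0) {Λ : Matrix κ κ ℝ} (hΛ : Λ.PosDef) :
    (W * Λ * Wᵀ).rank = Fintype.card κ := by
  refine le_antisymm ((rank_mul_le_left _ _).trans ((rank_mul_le_left _ _).trans
    (rank_le_card_width _))) ?_
  have hsub : (W * Λ * Wᵀ).submatrix v v = W.submatrix v id * Λ * (W.submatrix v id)ᵀ := by
    ext a b
    simp [mul_apply]
  have hdet : ((W * Λ * Wᵀ).submatrix v v).det ≠ 0 := by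
    rw [hsub, det_mul, det_mul, det_transpose]
    exact mul_ne_zero (mul_ne_zero hT hΛ.det_pos.ne') hT
  calc Fintype.card κ = ((W * Λ * Wᵀ).submatrix v v).rank := (rank_of_det_ne_zero hdet).symm
    _ ≤ (W * Λ * Wᵀ).rank := rank_submatrix_le _ _ _

end GaleMatrix

theorem geometric_hahn_banach_open_submodule {E : Type*} [AddCommGroup E] [Module ℝ E]
    [TopologicalSpace E] [IsTopologicalAddGroup E] [ContinuousSMul ℝ E] {U : Set E}
    (hUc : Convex ℝ U) (hUo : IsOpen U) {K : Submodule ℝ E} (hUK : Disjoint U K) :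
    ∃ f : StrongDual ℝ E, (∀ x ∈ U, f x < 0) ∧ ∀ x ∈ K, f x = 0 := by
  obtain ⟨f, s, hfU, hfK⟩ := geometric_hahn_banach_open hUc hUo K.convex hUK
  have hK0 (x : E) (hx : x ∈ K) : f x = 0 := by
    by_contra hne
    have := hfK _ (K.smul_mem ((s - 1) / f x) hx)
    rw [map_smul, smul_eq_mul, div_mul_cancel₀ _ hne] at this
    linarith
  exact ⟨f, fun x hx => (hfU x hx).trans_le (by simpa using hfK 0 K.zero_mem), hK0⟩

section Separation

variable {ι κ : Type*} [Fintype ι]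

theorem exists_eq_sum_mul_of_forall_eq_zero {𝕜 E : Type*} [Field 𝕜] [AddCommGroup E]
    [Module 𝕜 E] (Φ : E →ₗ[𝕜] Matrix ι ι 𝕜) (P : ι → ι → Prop) (f : E →ₗ[𝕜] 𝕜)
    (hf : ∀ x, (∀ i j, P i j → Φ x i j = 0) → f x = 0) :
    ∃ Y : Matrix ι ι 𝕜, (∀ i j, ¬ P i j → Y i j = 0) ∧
      ∀ x, f x = ∑ i, ∑ j, Y i j * Φ x i j := by
  classical
  let L : ι × ι → E →ₗ[𝕜] 𝕜 := fun ij =>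
    if P ij.1 ij.2 then entryLinearMap 𝕜 𝕜 ij.1 ij.2 ∘ₗ Φ else 0
  obtain ⟨c, hc⟩ := (Submodule.mem_span_range_iff_exists_fun 𝕜).mp <|
    mem_span_of_iInf_ker_le_ker (L := L) (K := f) fun x hx => hf x fun i j hij => by
      simpa [L, hij] using (Submodule.mem_iInf _).mp hx (i, j)
  refine ⟨Matrix.of fun i j => if P i j then c (i, j) else 0, fun i j h => by simp [h],
    fun x => ?_⟩
  rw [← hc]
  simp only [Fintype.sum_prod_type, LinearMap.coe_sum, Finset.sum_apply, of_apply, ite_mul,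
    zero_mul, L]
  refine Finset.sum_congr rfl fun i _ => Finset.sum_congr rfl fun j _ => ?_
  split_ifs <;> simp

theorem isOpen_setOf_posDef_add_conjTranspose [Fintype κ] :
    IsOpen {X : Matrix κ κ ℝ | (X + Xᴴ).PosDef} := by
  refine isOpen_iff_eventually.mpr fun X₀ hX₀ => ?_
  have hcont : Continuous fun q : Matrix κ κ ℝ × (κ → ℝ) => q.2 ⬝ᵥ ((q.1 + q.1ᴴ) *ᵥ q.2) := by
    fun_prop
  have hpos : ∀ᶠ X in nhds X₀, ∀ y ∈ Metric.sphere (0 : κ → ℝ) 1,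
      0 < y ⬝ᵥ ((X + Xᴴ) *ᵥ y) :=
    (isCompact_sphere 0 1).eventually_forall_of_forall_eventually fun y hy =>
      hcont.continuousAt.eventually (lt_mem_nhds (by
        simpa using hX₀.dotProduct_mulVec_pos (ne_zero_of_mem_unit_sphere ⟨y, hy⟩)))
  refine hpos.mono fun X hX => PosDef.of_dotProduct_mulVec_pos
    (isHermitian_add_transpose_self X) fun y hy => ?_
  have hnorm : 0 < ‖y‖ := norm_pos_iff.mpr hy
  have hu : ‖y‖⁻¹ • y ∈ Metric.sphere (0 : κ → ℝ) 1 := by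
    simp [norm_smul, hnorm.ne']
  have hscale : star y ⬝ᵥ ((X + Xᴴ) *ᵥ y) =
      ‖y‖ ^ 2 * ((‖y‖⁻¹ • y) ⬝ᵥ ((X + Xᴴ) *ᵥ (‖y‖⁻¹ • y))) := by
    simp only [star_trivial, mulVec_smul, dotProduct_smul, smul_dotProduct, smul_eq_mul]
    field_simp
  rw [hscale]
  exact mul_pos (by positivity) (hX _ hu)

theorem convex_setOf_posDef_add_conjTranspose :
    Convex ℝ {X : Matrix κ κ ℝ | (X + Xᴴ).PosDef} := by
  intro X hX Y hY a b ha hb hab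
  have hsum : (a • X + b • Y) + (a • X + b • Y)ᴴ = a • (X + Xᴴ) + b • (Y + Yᴴ) := by
    simp only [conjTranspose_add, conjTranspose_smul, star_trivial, smul_add]
    abel
  change PosDef _
  rw [hsum]
  rcases ha.eq_or_lt with rfl | ha
  · simpa [show b = 1 by linarith] using hY
  · exact (PosDef.smul hX ha).add_posSemidef (hY.posSemidef.smul hb)

theorem map_nonpos_of_posSemidef [Fintype κ] [DecidableEq κ] (f : Matrix κ κ ℝ →ₗ[ℝ] ℝ)
    (hf : ∀ X, X.PosDef → f X < 0) {X : Matrix κ κ ℝ} (hX : X.PosSemidef) : f X ≤ 0 := by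
  have hf1 : f 1 < 0 := hf 1 PosDef.one
  refine le_of_forall_pos_lt_add fun ε hε => ?_
  have hε' : ε / -f 1 * f 1 = -ε := by rw [div_neg, neg_mul, div_mul_cancel₀ _ hf1.ne]
  have := hf _ (PosDef.posSemidef_add hX (PosDef.one.smul (div_pos hε (neg_pos.mpr hf1))))
  rw [map_add, map_smul, smul_eq_mul, hε'] at this
  linarith

theorem sum_sum_mul_vecMulVec {R : Type*} [CommSemiring R] (Y : Matrix ι ι R) (z : ι → R) :
    ∑ i, ∑ j, Y i j * vecMulVec z z i j = z ⬝ᵥ (Y *ᵥ z) := by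
  simp only [vecMulVec_apply, dotProduct, mulVec, Finset.mul_sum]
  exact Finset.sum_congr rfl fun i _ => Finset.sum_congr rfl fun j _ => by ring

theorem sum_sum_mul_eq_zero_of_transpose_eq_neg {Y M : Matrix ι ι ℝ} (hY : Yᵀ = -Y)
    (hM : Mᵀ = M) : ∑ i, ∑ j, Y i j * M i j = 0 := by
  have hswap : ∑ i, ∑ j, Y i j * M i j = ∑ i, ∑ j, -(Y i j * M i j) := by
    rw [Finset.sum_comm]
    refine Finset.sum_congr rfl fun i _ => Finset.sum_congr rfl fun j _ => ?_
    rw [← transpose_apply Y, ← transpose_apply M, hY, hM, Matrix.neg_apply, neg_mul]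
  simp only [Finset.sum_neg_distrib] at hswap
  linarith

theorem exists_linearMap_neg_on_posDef_of_not_exists [Fintype κ] (W : Matrix ι κ ℝ)
    {P : ι → ι → Prop} (hP : ∀ i j, P i j → P j i)
    (hno : ¬ ∃ Λ : Matrix κ κ ℝ, Λ.PosDef ∧ ∀ i j, P i j → (W * Λ * Wᵀ) i j = 0) :
    ∃ (f : Matrix κ κ ℝ →ₗ[ℝ] ℝ) (Y : Matrix ι ι ℝ), (∀ i j, ¬ P i j → Y i j = 0) ∧
      (∀ X, f X = ∑ i, ∑ j, Y i j * (W * X * Wᵀ) i j) ∧ ∀ X, X.PosDef → f X < 0 := by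
  let Φ : Matrix κ κ ℝ →ₗ[ℝ] Matrix ι ι ℝ :=
    { toFun := fun X => W * X * Wᵀ
      map_add' := fun X Y => by simp [Matrix.mul_add, Matrix.add_mul]
      map_smul' := fun a X => by simp }
  let K : Submodule ℝ (Matrix κ κ ℝ) :=
    { carrier := {X | ∀ i j, P i j → (W * X * Wᵀ) i j = 0}
      add_mem' := fun hX hY i j hij => by
        simp [Matrix.mul_add, Matrix.add_mul, hX i j hij, hY i j hij]
      zero_mem' := fun i j _ => by simp
      smul_mem' := fun a X hX i j hij => by simp [hX i j hij] }
  -- `PosDef` is not an open condition among all matrices, but `(X + Xᴴ).PosDef` is.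
  have hdisj : Disjoint {X : Matrix κ κ ℝ | (X + Xᴴ).PosDef} K := by
    refine Set.disjoint_left.mpr fun X hXU hXK => hno ⟨X + Xᴴ, hXU, fun i j hij => ?_⟩
    have hT : W * Xᴴ * Wᵀ = (W * X * Wᵀ)ᵀ := by
      simp [conjTranspose_eq_transpose_of_trivial, transpose_mul, Matrix.mul_assoc]
    rw [Matrix.mul_add, Matrix.add_mul, Matrix.add_apply, hT, transpose_apply, hXK i j hij,
      hXK j i (hP i j hij), add_zero]
  obtain ⟨f, hfU, hfK⟩ := geometric_hahn_banach_open_submodule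
    convex_setOf_posDef_add_conjTranspose isOpen_setOf_posDef_add_conjTranspose hdisj
  obtain ⟨Y, hYP, hfY⟩ := exists_eq_sum_mul_of_forall_eq_zero Φ P f.toLinearMap
    fun X hX => hfK X hX
  exact ⟨f.toLinearMap, Y, hYP, hfY, fun X hX => hfU X (hX.add hX.conjTranspose)⟩

theorem exists_posDef_mul_mul_transpose_eq_zero [Fintype κ] [DecidableEq κ]
    (W : Matrix ι κ ℝ) {P : ι → ι → Prop} (hP : ∀ i j, P i j → P j i)
    (hW : ∀ C : Matrix ι ι ℝ, C.IsSymm → (∀ i j, ¬ P i j → C i j = 0) →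
      (∀ x, 0 ≤ (W *ᵥ x) ⬝ᵥ (C *ᵥ (W *ᵥ x))) → C = 0) :
    ∃ Λ : Matrix κ κ ℝ, Λ.PosDef ∧ ∀ i j, P i j → (W * Λ * Wᵀ) i j = 0 := by
  by_contra hno
  obtain ⟨f, Y, hYP, hfY, hfneg⟩ := exists_linearMap_neg_on_posDef_of_not_exists W hP hno
  have hanti : -(Y + Yᵀ) = 0 := by
    refine hW _ ?_ (fun i j hij => ?_) fun x => ?_
    · simp [IsSymm, transpose_add, add_comm]
    · simp [hYP i j hij, hYP j i fun h => hij (hP j i h)]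
    · have hquad : f (vecMulVec x x) = (W *ᵥ x) ⬝ᵥ (Y *ᵥ (W *ᵥ x)) := by
        rw [hfY, mul_vecMulVec, vecMulVec_mul, vecMul_transpose, sum_sum_mul_vecMulVec]
      have hpsd : (vecMulVec x x).PosSemidef := by simpa using posSemidef_vecMulVec_self_star x
      rw [neg_mulVec, add_mulVec, dotProduct_neg, dotProduct_add, dotProduct_mulVec _ Yᵀ,
        vecMul_transpose, dotProduct_comm _ (W *ᵥ x), ← hquad]
      linarith [map_nonpos_of_posSemidef f hfneg hpsd]
  have hf1 : f 1 = 0 := by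
    rw [hfY, sum_sum_mul_eq_zero_of_transpose_eq_neg]
    · rw [← sub_eq_zero, sub_neg_eq_add, add_comm, ← neg_eq_zero, hanti]
    · simp [transpose_mul]
  exact (hfneg 1 PosDef.one).ne hf1

end Separation

section RowColumnSplitting

variable {ι R : Type*} [DecidableEq ι] [CommRing R]

theorem Matrix.IsSymm.eq_eraseRowCol_add {C : Matrix ι ι R} (hC : C.IsSymm) {v : ι}
    (hv : C v v = 0) :
    C = (of fun i j => if i = v ∨ j = v then 0 else C i j) +
      (vecMulVec (fun i => C i v) (Pi.single v 1) + vecMulVec (Pi.single v 1) fun i => C i v) := by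
  have hCsymm (i j : ι) : C j i = C i j := congr_fun₂ hC i j
  ext i j
  by_cases hi : i = v <;> by_cases hj : j = v <;> simp [hi, hj, hv, hCsymm, vecMulVec_apply]

theorem dotProduct_mulVec_vecMulVec_single_add [Fintype ι] (c z : ι → R) (v : ι) :
    z ⬝ᵥ ((vecMulVec c (Pi.single v 1) + vecMulVec (Pi.single v 1) c) *ᵥ z) =
      2 * (z v * (c ⬝ᵥ z)) := by
  simp [add_mulVec, vecMulVec_mulVec, dotProduct_add, dotProduct_comm z c]
  ring

end RowColumnSplitting

section Lateration

variable {d n : ℕ}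

/-- For `k = n`, a nonzero such `C` is what would obstruct the existence of the stress, by the
separation theorem `exists_posDef_mul_mul_transpose_eq_zero`; smaller `k` serve the induction. -/
structure IsStressObstruction (G : SimpleGraph (Fin n)) (p : Fin n → Fin d → ℝ) (k : ℕ)
    (C : Matrix (Fin n) (Fin n) ℝ) : Prop where
  isSymm : C.IsSymm
  support : ∀ i j, C i j ≠ 0 → i ≠ j ∧ ¬ G.Adj i j ∧ (i : ℕ) < k ∧ (j : ℕ) < k
  nonneg : ∀ z, augmentedConfig p *ᵥ z = 0 → (∀ i : Fin n, k ≤ (i : ℕ) → z i = 0) →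
    0 ≤ z ⬝ᵥ (C *ᵥ z)

theorem IsStressObstruction.eq_zero_of_succ {G : SimpleGraph (Fin n)} [DecidableRel G.Adj]
    {p : Fin n → Fin d → ℝ} {k : ℕ} (hkn : k < n)
    (hlat : (univ.filter fun i => G.Adj i ⟨k, hkn⟩ ∧ i < ⟨k, hkn⟩).card = d + 1)
    (hGP : AffineIndependent ℝ
      (fun i : (univ.filter fun i => G.Adj i ⟨k, hkn⟩ ∧ i < ⟨k, hkn⟩) => p i))
    (IH : ∀ C, IsStressObstruction G p k C → C = 0) {C : Matrix (Fin n) (Fin n) ℝ}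
    (hC : IsStressObstruction G p (k + 1) C) : C = 0 := by
  set v : Fin n := ⟨k, hkn⟩
  have hvv : C v v = 0 := by
    by_contra h
    exact (hC.support v v h).1 rfl
  have hsplit := hC.isSymm.eq_eraseRowCol_add hvv
  set C' : Matrix (Fin n) (Fin n) ℝ := of fun i j => if i = v ∨ j = v then 0 else C i j
  set c : Fin n → ℝ := fun i => C i v
  have hquad (z : Fin n → ℝ) : z ⬝ᵥ (C *ᵥ z) = z ⬝ᵥ (C' *ᵥ z) + 2 * (z v * (c ⬝ᵥ z)) := by
    rw [← dotProduct_mulVec_vecMulVec_single_add, ← dotProduct_add, ← add_mulVec, ← hsplit]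
  have hvk {i : Fin n} (hi : i ≠ v) : (i : ℕ) ≠ k := fun h => hi (Fin.ext h)
  have hC' : C' = 0 := by
    refine IH C' ⟨?_, fun i j h => ?_, fun z hz hzk => ?_⟩
    · have hCsymm (i j : Fin n) : C j i = C i j := congr_fun₂ hC.isSymm i j
      ext i j
      simp [C', hCsymm, or_comm]
    · simp only [C', of_apply, ne_eq, ite_eq_left_iff, not_or, not_forall] at h
      obtain ⟨⟨hi, hj⟩, h⟩ := h
      obtain ⟨hij, hadj, hik, hjk⟩ := hC.support i j h
      exact ⟨hij, hadj, by have := hvk hi; omega, by have := hvk hj; omega⟩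
    · have := hC.nonneg z hz fun i hi => hzk i (by omega)
      rwa [hquad, hzk v le_rfl, zero_mul, mul_zero, add_zero] at this
  have hc : c = 0 := by
    refine eq_zero_of_forall_nonneg_mul_dotProduct p hGP hlat (R := {i | (i : ℕ) < k})
      (fun i hi => (mem_filter.mp hi).2.2) (v := v) (lt_irrefl k) (fun i hi => ?_)
      (fun i hi => ?_) fun z hz hzs => ?_
    · by_contra h
      obtain ⟨hiv, -, hik, -⟩ := hC.support i v h
      exact hi (show (i : ℕ) < k by have := hvk hiv; omega)
    · by_contra h
      exact (hC.support i v h).2.1 (mem_filter.mp hi).2.1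
    · have := hC.nonneg z hz fun i hi =>
        hzs i (fun h => by rw [h] at hi; exact Nat.not_succ_le_self k hi) (by change ¬ _ < k; omega)
      rw [hquad, hC'] at this
      simpa using this
  rw [hsplit, hC', hc]
  simp

theorem IsStressObstruction.eq_zero {G : SimpleGraph (Fin n)} [DecidableRel G.Adj]
    {p : Fin n → Fin d → ℝ}
    (hclique : ∀ i j : Fin n, i ≠ j → (i : ℕ) < d + 1 → (j : ℕ) < d + 1 → G.Adj i j)
    (hlat : ∀ j : Fin n, d + 1 ≤ (j : ℕ) →
      (univ.filter fun i : Fin n => G.Adj i j ∧ i < j).card = d + 1)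
    (hGP : ∀ s : Finset (Fin n), s.card = d + 1 → AffineIndependent ℝ (fun i : s => p i))
    {k : ℕ} (hk : d + 1 ≤ k) (hkn : k ≤ n) {C : Matrix (Fin n) (Fin n) ℝ}
    (hC : IsStressObstruction G p k C) : C = 0 := by
  induction k, hk using Nat.le_induction generalizing C with
  | base =>
    ext i j
    by_contra h
    obtain ⟨hij, hadj, hi, hj⟩ := hC.support i j h
    exact hadj (hclique i j hij hi hj)
  | succ k hk IH =>
    have hlatk := hlat ⟨k, hkn⟩ hk
    exact hC.eq_zero_of_succ hkn hlatk (hGP _ hlatk) fun C' hC' => IH (by omega) hC'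

theorem exists_galeMatrix_of_lateration {G : SimpleGraph (Fin n)} [DecidableRel G.Adj]
    {p : Fin n → Fin d → ℝ} (hn : d + 1 ≤ n)
    (hlat : ∀ j : Fin n, d + 1 ≤ (j : ℕ) →
      (univ.filter fun i : Fin n => G.Adj i j ∧ i < j).card = d + 1)
    (hGP : ∀ s : Finset (Fin n), s.card = d + 1 → AffineIndependent ℝ (fun i : s => p i)) :
    ∃ (W : Matrix (Fin n) (Fin (n - (d + 1))) ℝ) (v : Fin (n - (d + 1)) → Fin n),
      augmentedConfig p * W = 0 ∧ (W.submatrix v id).det ≠ 0 ∧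
      ∀ z, augmentedConfig p *ᵥ z = 0 → ∃ x, W *ᵥ x = z := by
  let v : Fin (n - (d + 1)) → Fin n := fun a => ⟨d + 1 + a, by omega⟩
  have hω (a : Fin (n - (d + 1))) : ∃ ω : Fin n → ℝ, augmentedConfig p *ᵥ ω = 0 ∧
      ω (v a) = 1 ∧ ∀ i, v a < i → ω i = 0 := by
    have hcard := hlat (v a) (by simp [v])
    obtain ⟨ω, hAω, hωv, hω⟩ :=
      exists_augmentedConfig_mulVec_eq_zero p (hGP _ hcard) hcard (w := v a) (by simp)
    exact ⟨ω, hAω, hωv, fun i hi => hω i hi.ne' fun h => (mem_filter.mp h).2.2.asymm hi⟩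
  choose ω hAω hωv hω using hω
  let W : Matrix (Fin n) (Fin (n - (d + 1))) ℝ := of fun i a => ω a i
  have hAW : augmentedConfig p * W = 0 := by
    ext r a
    exact congr_fun (hAω a) r
  have hT : (W.submatrix v id).det ≠ 0 := by
    have hupper : (W.submatrix v id).IsUpperTriangular := fun a b hba =>
      hω b (v a) (Fin.lt_def.mpr (by have : (b : ℕ) < a := hba; simp only [v]; omega))
    simp [det_of_isUpperTriangular hupper, W, hωv]
  refine ⟨W, v, hAW, hT, fun z hz => exists_mulVec_eq_of_mulVec_eq_zero hAW hT
    (fun z hz hzv => ?_) hz⟩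
  let s₀ : Finset (Fin n) := univ.map (Fin.castLEEmb hn)
  refine eq_zero_of_augmentedConfig_mulVec_eq_zero (hGP s₀ (by simp [s₀])) hz fun i hi => ?_
  have hi : d + 1 ≤ (i : ℕ) := by
    by_contra h
    exact hi (mem_map.mpr ⟨⟨i, by omega⟩, mem_univ _, rfl⟩)
  simpa [v, Fin.ext_iff, Nat.add_sub_cancel' hi] using hzv ⟨i - (d + 1), by omega⟩

end Lateration

theorem stmt_12 (d n : ℕ) (hn : d + 1 ≤ n) (G : SimpleGraph (Fin n)) [DecidableRel G.Adj]
    (hclique : ∀ i j : Fin n, i ≠ j → (i : ℕ) < d + 1 → (j : ℕ) < d + 1 → G.Adj i j)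
    (hlat : ∀ j : Fin n, d + 1 ≤ (j : ℕ) →
      (Finset.univ.filter (fun i : Fin n => G.Adj i j ∧ i < j)).card = d + 1)
    (p : Fin n → (Fin d → ℝ))
    (hGP : ∀ s : Finset (Fin n), s.card = d + 1 →
        AffineIndependent ℝ (fun i : s => p i)) :
    ∃ S : Matrix (Fin n) (Fin n) ℝ, S.PosSemidef ∧ S.rank = n - (d + 1) ∧
      (Matrix.of fun (i : Fin (d + 1)) (j : Fin n) =>
        if h : (i : ℕ) < d then p j ⟨i, h⟩ else (1 : ℝ)) * S = 0 ∧
      (∀ i j : Fin n, i ≠ j → ¬ G.Adj i j → S i j = 0) := by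
  obtain ⟨W, v, hAW, hT, hker⟩ := exists_galeMatrix_of_lateration hn hlat hGP
  have hobstruction (C : Matrix (Fin n) (Fin n) ℝ) (hCsymm : C.IsSymm)
      (hCG : ∀ i j, ¬ (i ≠ j ∧ ¬ G.Adj i j) → C i j = 0)
      (hCW : ∀ x, 0 ≤ (W *ᵥ x) ⬝ᵥ (C *ᵥ (W *ᵥ x))) : C = 0 := by
    refine IsStressObstruction.eq_zero hclique hlat hGP hn le_rfl
      ⟨hCsymm, fun i j h => ?_, fun z hz _ => ?_⟩
    · exact ⟨(not_not.mp (mt (hCG i j) h)).1, (not_not.mp (mt (hCG i j) h)).2, i.isLt, j.isLt⟩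
    · obtain ⟨x, rfl⟩ := hker z hz
      exact hCW x
  obtain ⟨Λ, hΛ, hΛG⟩ := exists_posDef_mul_mul_transpose_eq_zero W
    (fun i j h => ⟨h.1.symm, fun h' => h.2 h'.symm⟩) hobstruction
  refine ⟨W * Λ * Wᵀ, ?_, ?_, ?_, fun i j hij hadj => hΛG i j ⟨hij, hadj⟩⟩
  · simpa [conjTranspose_eq_transpose_of_trivial] using hΛ.posSemidef.mul_mul_conjTranspose_same W
  · rw [rank_mul_mul_transpose_of_posDef hT hΛ, Fintype.card_fin]
  · change augmentedConfig p * _ = 0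
    rw [← Matrix.mul_assoc, ← Matrix.mul_assoc, hAW, Matrix.zero_mul, Matrix.zero_mul]
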